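/- arXiv:2512.18990 — 7 statements merged into one kernel-verified Lean document; each statement's English description precedes it below -/
import Mathlib

section
/- Let c > 0, t > 0, let μ be a probability measure on (-∞, 0] with μ^{(c)} < ∞, and let w : (-∞, t] → [0, ∞) be Borel measurable with M := sup_{v ≤ 0} e^{c v} w(v) < ∞. Then ∫_0^t ∫_{(-∞,0]} w(s + u) μ(du) ds ≤ (M/c) μ^{(c)} + ∫_0^t w(s) ds, as an inequality of integrals of nonnegative functions (valued in [0, ∞]). -/
/-!
For fixed `u ≤ 0` the shifted window `(u, t + u]` is covered by `(u, 0]` and `(0, t]`.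
On `(u, 0]` the weight condition gives `w v ≤ M e^{-c v}`, whose integral over `(u, ∞)` is
`M e^{-c u} / c`; integrating this bound against `μ` after Tonelli produces `(M / c) μ^{(c)}`,
while the `(0, t]` part contributes at most `μ((-∞, 0]) ∫_0^t w ≤ ∫_0^t w`.
-/

open MeasureTheory
open scoped ENNReal

/-- `μ^{(b)} = ∫_{(-∞,0]} e^{-b u} μ(du)`. -/
noncomputable def muExp (μ : Measure ℝ) (b : ℝ) : ℝ≥0∞ :=
  ∫⁻ u, ENNReal.ofReal (Real.exp (-b * u)) ∂μ

open Set

theorem setLIntegral_Ioc_comp_add_right (f : ℝ → ℝ≥0∞) (a b u : ℝ) :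
    ∫⁻ s in Ioc a b, f (s + u) = ∫⁻ v in Ioc (a + u) (b + u), f v := by
  have h := (measurePreserving_add_right volume u).setLIntegral_comp_preimage_emb
    (measurableEmbedding_addRight u) f (Ioc (a + u) (b + u))
  rwa [preimage_add_const_Ioc, add_sub_cancel_right, add_sub_cancel_right] at h

theorem setLIntegral_Ioc_comp_add_le (f : ℝ → ℝ≥0∞) {u : ℝ} (hu : u ≤ 0) (t : ℝ) :
    ∫⁻ s in Ioc 0 t, f (s + u) ≤ (∫⁻ v in Ioc u 0, f v) + ∫⁻ v in Ioc 0 t, f v := by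
  have hcover : Ioc u (t + u) ⊆ Ioc u 0 ∪ Ioc 0 t := by
    rintro v ⟨huv, hvt⟩
    by_cases hv : v ≤ 0
    · exact Or.inl ⟨huv, hv⟩
    · exact Or.inr ⟨not_le.mp hv, by linarith⟩
  rw [setLIntegral_Ioc_comp_add_right, zero_add]
  exact (lintegral_mono_set hcover).trans (lintegral_union_le f _ _)

theorem lintegral_Ioi_ofReal_exp_neg_mul {c : ℝ} (hc : 0 < c) (u : ℝ) :
    ∫⁻ v in Ioi u, ENNReal.ofReal (Real.exp (-c * v)) = ENNReal.ofReal (Real.exp (-c * u) / c) := by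
  rw [← ofReal_integral_eq_lintegral_ofReal (exp_neg_integrableOn_Ioi u hc)
    (ae_of_all _ fun v => (Real.exp_pos _).le), integral_exp_mul_Ioi (by linarith), neg_div_neg_eq]

theorem le_mul_exp_neg_of_exp_mul_le {c M v w : ℝ} (h : Real.exp (c * v) * w ≤ M) :
    w ≤ M * Real.exp (-c * v) := by
  rwa [neg_mul, Real.exp_neg, ← div_eq_mul_inv, le_div_iff₀ (Real.exp_pos _), mul_comm]

theorem setLIntegral_Ioc_zero_le_of_exp_mul_le {c M : ℝ} (hc : 0 < c) {w : ℝ → ℝ}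
    (hM : ∀ v ≤ 0, Real.exp (c * v) * w v ≤ M) (u : ℝ) :
    ∫⁻ v in Ioc u 0, ENNReal.ofReal (w v) ≤
      ENNReal.ofReal (M / c) * ENNReal.ofReal (Real.exp (-c * u)) := by
  calc ∫⁻ v in Ioc u 0, ENNReal.ofReal (w v)
      ≤ ∫⁻ v in Ioc u 0, ENNReal.ofReal M * ENNReal.ofReal (Real.exp (-c * v)) := by
        refine setLIntegral_mono (by fun_prop) fun v hv => ?_
        rw [← ENNReal.ofReal_mul' (Real.exp_pos _).le]
        exact ENNReal.ofReal_le_ofReal (le_mul_exp_neg_of_exp_mul_le (hM v hv.2))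
    _ = ENNReal.ofReal M * ∫⁻ v in Ioc u 0, ENNReal.ofReal (Real.exp (-c * v)) :=
        lintegral_const_mul _ (by fun_prop)
    _ ≤ ENNReal.ofReal M * ENNReal.ofReal (Real.exp (-c * u) / c) := by
        gcongr
        exact (lintegral_mono_set Ioc_subset_Ioi_self).trans_eq
          (lintegral_Ioi_ofReal_exp_neg_mul hc u)
    _ = ENNReal.ofReal (M / c) * ENNReal.ofReal (Real.exp (-c * u)) := by
        have hc' : 0 ≤ c⁻¹ := inv_nonneg.mpr hc.le
        rw [div_eq_mul_inv, div_eq_mul_inv, ENNReal.ofReal_mul' hc', ENNReal.ofReal_mul' hc']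
        ring

theorem stmt_7_general (c t M : ℝ) (hc : 0 < c)
    (μ : Measure ℝ) [IsProbabilityMeasure μ]
    (w : ℝ → ℝ) (hw : Measurable w)
    (hM : IsLUB {x : ℝ | ∃ v ≤ (0 : ℝ), x = Real.exp (c * v) * w v} M) :
    (∫⁻ s in Set.Ioc 0 t, ∫⁻ u in Set.Iic 0, ENNReal.ofReal (w (s + u)) ∂μ) ≤
      ENNReal.ofReal (M / c) * muExp μ c +
        ∫⁻ s in Set.Ioc 0 t, ENNReal.ofReal (w s) := by
  set B := ∫⁻ s in Ioc 0 t, ENNReal.ofReal (w s)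
  have hinner : ∀ u ∈ Iic (0 : ℝ), ∫⁻ s in Ioc 0 t, ENNReal.ofReal (w (s + u)) ≤
      ENNReal.ofReal (M / c) * ENNReal.ofReal (Real.exp (-c * u)) + B := fun u hu =>
    (setLIntegral_Ioc_comp_add_le (fun v => ENNReal.ofReal (w v)) hu t).trans <| add_le_add_left
      (setLIntegral_Ioc_zero_le_of_exp_mul_le hc (fun v hv => hM.1 ⟨v, hv, rfl⟩) u) _
  rw [lintegral_lintegral_swap (by fun_prop)]
  calc ∫⁻ u in Iic 0, (∫⁻ s in Ioc 0 t, ENNReal.ofReal (w (s + u))) ∂μ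
      ≤ ∫⁻ u in Iic 0, (ENNReal.ofReal (M / c) * ENNReal.ofReal (Real.exp (-c * u)) + B) ∂μ :=
        setLIntegral_mono (by fun_prop) hinner
    _ = ENNReal.ofReal (M / c) * ∫⁻ u in Iic 0, ENNReal.ofReal (Real.exp (-c * u)) ∂μ
          + B * μ (Iic 0) := by
        rw [lintegral_add_right _ measurable_const, setLIntegral_const,
          lintegral_const_mul _ (by fun_prop)]
    _ ≤ ENNReal.ofReal (M / c) * muExp μ c + B * 1 := by
        gcongr
        exacts [setLIntegral_le_lintegral _ _, prob_le_one]
    _ = ENNReal.ofReal (M / c) * muExp μ c + B := by rw [mul_one]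

/-- Let `c, t > 0`, let `μ` be a probability measure on `(-∞,0]` with
`μ^{(c)} < ∞`, and let `w : (-∞,t] → [0,∞)` be Borel measurable with
`M = sup_{v ≤ 0} e^{c v} w(v) < ∞`.  Then
`∫_0^t ∫_{(-∞,0]} w(s+u) μ(du) ds ≤ (M/c) μ^{(c)} + ∫_0^t w(s) ds`,
as an inequality in `[0, ∞]`. -/
theorem stmt_7 (c t M : ℝ) (hc : 0 < c) (ht : 0 < t)
    (μ : Measure ℝ) [IsProbabilityMeasure μ] (hsupp : μ (Set.Ioi 0) = 0)
    (hfin : muExp μ c < ⊤)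
    (w : ℝ → ℝ) (hw : Measurable w) (hwnn : ∀ v, v ≤ t → 0 ≤ w v)
    (hM : IsLUB {x : ℝ | ∃ v ≤ (0 : ℝ), x = Real.exp (c * v) * w v} M) :
    (∫⁻ s in Set.Ioc 0 t, ∫⁻ u in Set.Iic 0, ENNReal.ofReal (w (s + u)) ∂μ) ≤
      ENNReal.ofReal (M / c) * muExp μ c +
        ∫⁻ s in Set.Ioc 0 t, ENNReal.ofReal (w s) :=
  stmt_7_general c t M hc μ w hw hM
end

section
/- Let r > 0, b > r, let μ ∈ P_b be a probability measure on (-∞, 0], let ξ ∈ C_r, let k > 0 and let 0 ≤ s ≤ k. Then ∫_{(-∞,-k]} |ξ(s + u) − ξ(s − k)| μ(du) ≤ 2 ‖ξ‖_r μ^{(b)} e^{−(b − r) k}. -/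
open MeasureTheory
open scoped ENNReal

/-- The weighted sup norm `‖φ‖_r = sup_{u ≤ 0} e^{r u} |φ(u)|`. -/
noncomputable def crNorm (n : ℕ) (r : ℝ) (φ : ℝ → EuclideanSpace ℝ (Fin n)) : ℝ :=
  sSup ((fun u => Real.exp (r * u) * ‖φ u‖) '' Set.Iic 0)

/-- Membership in the phase space `C_r`. -/
def MemCr (n : ℕ) (r : ℝ) (φ : ℝ → EuclideanSpace ℝ (Fin n)) : Prop :=
  ContinuousOn φ (Set.Iic 0) ∧
    BddAbove ((fun u => Real.exp (r * u) * ‖φ u‖) '' Set.Iic 0)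

/-- Let `r > 0`, `b > r`, `μ ∈ P_b` a probability measure on `(-∞, 0]`,
`ξ ∈ C_r`, `k > 0` and `0 ≤ s ≤ k`.  Then
`∫_{(-∞,-k]} |ξ(s+u) - ξ(s-k)| μ(du) ≤ 2 ‖ξ‖_r μ^{(b)} e^{-(b-r)k}`. -/
theorem stmt_10 (n : ℕ) (r b k s : ℝ) (hr : 0 < r) (hrb : r < b)
    (μ : Measure ℝ) [IsProbabilityMeasure μ] (hsupp : μ (Set.Ioi 0) = 0)
    (hfin : muExp μ b < ⊤)
    (ξ : ℝ → EuclideanSpace ℝ (Fin n)) (hξ : MemCr n r ξ)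
    (hk : 0 < k) (hs0 : 0 ≤ s) (hsk : s ≤ k) :
    (∫⁻ u in Set.Iic (-k), ENNReal.ofReal ‖ξ (s + u) - ξ (s - k)‖ ∂μ) ≤
      ENNReal.ofReal (2 * crNorm n r ξ * Real.exp (-(b - r) * k)) * muExp μ b := by
  set M := crNorm n r ξ with hM
  -- bound on ξ
  have hbound : ∀ v : ℝ, v ≤ 0 → ‖ξ v‖ ≤ M * Real.exp (-r * v) := by
    intro v hv
    have h1 : Real.exp (r * v) * ‖ξ v‖ ≤ M :=
      le_csSup hξ.2 ⟨v, hv, rfl⟩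
    have h2 : (0:ℝ) < Real.exp (r * v) := Real.exp_pos _
    rw [show -r * v = -(r*v) by ring, Real.exp_neg, ← div_eq_mul_inv, le_div_iff₀ h2]
    nlinarith [h1]
  have hMnn : 0 ≤ M := by
    have := hbound 0 le_rfl
    have := norm_nonneg (ξ 0)
    nlinarith [Real.exp_pos (-r * 0)]
  -- pointwise bound
  have hpt : ∀ u ∈ Set.Iic (-k),
      ENNReal.ofReal ‖ξ (s + u) - ξ (s - k)‖ ≤
        ENNReal.ofReal (2 * M * Real.exp (-(b - r) * k)) *
          ENNReal.ofReal (Real.exp (-b * u)) := by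
    intro u hu
    rw [Set.mem_Iic] at hu
    rw [← ENNReal.ofReal_mul (by positivity)]
    apply ENNReal.ofReal_le_ofReal
    have h0 : s + u ≤ 0 := by linarith
    have h0' : s - k ≤ 0 := by linarith
    have e1 : Real.exp (-r * (s + u)) ≤ Real.exp (-(b - r) * k + -b * u) := by
      apply Real.exp_le_exp.2
      nlinarith [mul_nonneg hr.le hs0, mul_nonneg (sub_pos.2 hrb).le (neg_nonneg.2 (by linarith : u + k ≤ 0))]
    have e2 : Real.exp (-r * (s - k)) ≤ Real.exp (-(b - r) * k + -b * u) := by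
      apply Real.exp_le_exp.2
      nlinarith [mul_nonneg hr.le hs0, mul_nonneg (lt_trans hr hrb).le (neg_nonneg.2 (by linarith : u + k ≤ 0))]
    calc ‖ξ (s + u) - ξ (s - k)‖ ≤ ‖ξ (s + u)‖ + ‖ξ (s - k)‖ := norm_sub_le _ _
      _ ≤ M * Real.exp (-r * (s + u)) + M * Real.exp (-r * (s - k)) := by
          gcongr
          exacts [hbound _ h0, hbound _ h0']
      _ ≤ M * Real.exp (-(b - r) * k + -b * u) + M * Real.exp (-(b - r) * k + -b * u) := by
          gcongr
      _ = 2 * M * Real.exp (-(b - r) * k) * Real.exp (-b * u) := by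
          rw [Real.exp_add]; ring
  calc (∫⁻ u in Set.Iic (-k), ENNReal.ofReal ‖ξ (s + u) - ξ (s - k)‖ ∂μ)
      ≤ ∫⁻ u in Set.Iic (-k),
          ENNReal.ofReal (2 * M * Real.exp (-(b - r) * k)) *
            ENNReal.ofReal (Real.exp (-b * u)) ∂μ := by
        have hm : Measurable fun u : ℝ => ENNReal.ofReal (2 * M * Real.exp (-(b - r) * k)) *
            ENNReal.ofReal (Real.exp (-b * u)) := by fun_prop
        exact setLIntegral_mono hm hpt
    _ = ENNReal.ofReal (2 * M * Real.exp (-(b - r) * k)) *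
          ∫⁻ u in Set.Iic (-k), ENNReal.ofReal (Real.exp (-b * u)) ∂μ := by
        have hm : Measurable fun u : ℝ => ENNReal.ofReal (Real.exp (-b * u)) := by fun_prop
        rw [lintegral_const_mul _ hm]
    _ ≤ ENNReal.ofReal (2 * M * Real.exp (-(b - r) * k)) * muExp μ b := by
        exact mul_le_mul_right (setLIntegral_le_lintegral _ _) _
end

section
/- Let r > 0, b > r, let μ ∈ P_b be a probability measure on (-∞, 0], let ξ ∈ C_r, let T > 0 and k ≥ T. Let x, y : (-∞, T] → ℝ^n be Borel measurable functions with x(u) = ξ(u) and y(u) = ξ(u) for all u ≤ 0. Then for every s ∈ [0, T], ∫_{(-∞,0]} |x_s(u) − π_k(y_s)(u)| μ(du) ≤ ∫_{[-s,0]} |x(s + u) − y(s + u)| μ(du) + 2 ‖ξ‖_r μ^{(b)} e^{−(b − r) k}. -/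
open MeasureTheory
open scoped ENNReal

/-- The truncation mapping `π_k`: `π_k(φ)(u) = φ(u)` for `u ∈ [-k, 0]` and
`π_k(φ)(u) = φ(-k)` for `u < -k`. -/
noncomputable def trunc (n : ℕ) (k : ℝ) (φ : ℝ → EuclideanSpace ℝ (Fin n)) :
    ℝ → EuclideanSpace ℝ (Fin n) :=
  fun u => if -k ≤ u then φ u else φ (-k)

/-
On `[-s, 0]` the truncation does nothing because `k ≥ s`. For `u < -s` both `x_s(u)` and
`π_k(y_s)(u)` are values of `ξ` at points `v ≥ u`, and they coincide unless `u < -k`. There the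
weighted bound `|ξ(v)| ≤ ‖ξ‖_r e^{-r v}` and `e^{-r v} ≤ e^{-(b-r)k} e^{-b u}` (valid since
`u < -k` and `r ≤ b`) make the tail contribute at most `2 ‖ξ‖_r e^{-(b-r)k} μ^{(b)}`.
-/

theorem norm_le_crNorm_mul_exp {n : ℕ} {r : ℝ} {φ : ℝ → EuclideanSpace ℝ (Fin n)}
    (hφ : BddAbove ((fun u => Real.exp (r * u) * ‖φ u‖) '' Set.Iic 0)) {v : ℝ} (hv : v ≤ 0) :
    ‖φ v‖ ≤ crNorm n r φ * Real.exp (-r * v) := by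
  have hle : Real.exp (r * v) * ‖φ v‖ ≤ crNorm n r φ := le_csSup hφ ⟨v, hv, rfl⟩
  rwa [← le_div_iff₀' (Real.exp_pos _), div_eq_mul_inv, ← Real.exp_neg, ← neg_mul] at hle

theorem crNorm_nonneg {n : ℕ} {r : ℝ} {φ : ℝ → EuclideanSpace ℝ (Fin n)}
    (hφ : BddAbove ((fun u => Real.exp (r * u) * ‖φ u‖) '' Set.Iic 0)) : 0 ≤ crNorm n r φ :=
  (norm_nonneg _).trans ((norm_le_crNorm_mul_exp hφ le_rfl).trans (by simp))

theorem exp_neg_mul_le_exp_mul_exp {r b k u v : ℝ} (hr : 0 ≤ r) (hrb : r ≤ b) (hu : u ≤ -k)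
    (huv : u ≤ v) :
    Real.exp (-r * v) ≤ Real.exp (-(b - r) * k) * Real.exp (-b * u) := by
  rw [← Real.exp_add, Real.exp_le_exp]
  nlinarith

theorem norm_sub_le_two_mul_crNorm_mul_exp {n : ℕ} {r b k u v w : ℝ} {φ : ℝ → EuclideanSpace ℝ (Fin n)}
    (hφ : BddAbove ((fun u => Real.exp (r * u) * ‖φ u‖) '' Set.Iic 0)) (hr : 0 ≤ r)
    (hrb : r ≤ b) (hu : u ≤ -k) (hv : v ≤ 0) (hw : w ≤ 0) (huv : u ≤ v) (huw : u ≤ w) :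
    ‖φ v - φ w‖ ≤ 2 * crNorm n r φ * Real.exp (-(b - r) * k) * Real.exp (-b * u) := by
  have hbound : ∀ t ≤ (0 : ℝ), u ≤ t →
      ‖φ t‖ ≤ crNorm n r φ * (Real.exp (-(b - r) * k) * Real.exp (-b * u)) := fun t ht hut =>
    (norm_le_crNorm_mul_exp hφ ht).trans
      (mul_le_mul_of_nonneg_left (exp_neg_mul_le_exp_mul_exp hr hrb hu hut) (crNorm_nonneg hφ))
  calc ‖φ v - φ w‖ ≤ ‖φ v‖ + ‖φ w‖ := norm_sub_le _ _
    _ ≤ _ := by linarith [hbound v hv huv, hbound w hw huw]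

theorem trunc_of_le {n : ℕ} {k u : ℝ} (φ : ℝ → EuclideanSpace ℝ (Fin n)) (hu : -k ≤ u) :
    trunc n k φ u = φ u :=
  if_pos hu

theorem trunc_of_lt {n : ℕ} {k u : ℝ} (φ : ℝ → EuclideanSpace ℝ (Fin n)) (hu : u < -k) :
    trunc n k φ u = φ (-k) :=
  if_neg (not_le.mpr hu)

theorem norm_sub_trunc_segment_le {n : ℕ} {r b k s u : ℝ} {ξ x y : ℝ → EuclideanSpace ℝ (Fin n)}
    (hξ : BddAbove ((fun u => Real.exp (r * u) * ‖ξ u‖) '' Set.Iic 0)) (hr : 0 ≤ r)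
    (hrb : r ≤ b) (hxξ : ∀ u ≤ (0 : ℝ), x u = ξ u) (hyξ : ∀ u ≤ (0 : ℝ), y u = ξ u)
    (hs0 : 0 ≤ s) (hsk : s ≤ k) (hu : u < -s) :
    ‖x (s + u) - trunc n k (fun v => y (s + v)) u‖ ≤
      2 * crNorm n r ξ * Real.exp (-(b - r) * k) * Real.exp (-b * u) := by
  have hsu : s + u ≤ 0 := by linarith
  rw [hxξ _ hsu]
  rcases le_or_gt (-k) u with hku | hku
  · rw [trunc_of_le _ hku, hyξ _ hsu, sub_self, norm_zero]
    have := crNorm_nonneg hξ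
    positivity
  · rw [trunc_of_lt _ hku, hyξ _ (by linarith)]
    exact norm_sub_le_two_mul_crNorm_mul_exp hξ hr hrb hku.le hsu (by linarith) (by linarith) (by linarith)

theorem setLIntegral_le_ofReal_mul_muExp {μ : Measure ℝ} {S : Set ℝ} {f : ℝ → ℝ≥0∞} {b C : ℝ}
    (hS : MeasurableSet S) (hf : ∀ u ∈ S, f u ≤ ENNReal.ofReal (C * Real.exp (-b * u))) :
    ∫⁻ u in S, f u ∂μ ≤ ENNReal.ofReal C * muExp μ b :=
  calc ∫⁻ u in S, f u ∂μ ≤ ∫⁻ u in S, ENNReal.ofReal C * ENNReal.ofReal (Real.exp (-b * u)) ∂μ :=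
        setLIntegral_mono' hS fun u hu =>
          (hf u hu).trans_eq (ENNReal.ofReal_mul' (Real.exp_pos _).le)
    _ = ENNReal.ofReal C * ∫⁻ u in S, ENNReal.ofReal (Real.exp (-b * u)) ∂μ :=
        lintegral_const_mul' _ _ ENNReal.ofReal_ne_top
    _ ≤ ENNReal.ofReal C * muExp μ b := by
        gcongr
        exact setLIntegral_le_lintegral _ _

theorem lintegral_Iic_le_Iio_add_Icc {μ : Measure ℝ} (f : ℝ → ℝ≥0∞) {a c : ℝ} :
    ∫⁻ u in Set.Iic c, f u ∂μ ≤ (∫⁻ u in Set.Iio a, f u ∂μ) + ∫⁻ u in Set.Icc a c, f u ∂μ := by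
  refine (lintegral_mono_set fun u hu => ?_).trans (lintegral_union_le _ _ _)
  rcases lt_or_ge u a with h | h
  exacts [Or.inl h, Or.inr ⟨h, hu⟩]

theorem stmt_11_general (n : ℕ) (r b k T s : ℝ) (hr : 0 < r) (hrb : r < b)
    (μ : Measure ℝ)
    (ξ : ℝ → EuclideanSpace ℝ (Fin n)) (hξ : MemCr n r ξ)
    (hTk : T ≤ k)
    (x y : ℝ → EuclideanSpace ℝ (Fin n))
    (hxξ : ∀ u ≤ (0 : ℝ), x u = ξ u) (hyξ : ∀ u ≤ (0 : ℝ), y u = ξ u)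
    (hs : s ∈ Set.Icc 0 T) :
    (∫⁻ u in Set.Iic 0,
        ENNReal.ofReal ‖x (s + u) - trunc n k (fun v => y (s + v)) u‖ ∂μ) ≤
      (∫⁻ u in Set.Icc (-s) 0, ENNReal.ofReal ‖x (s + u) - y (s + u)‖ ∂μ) +
        ENNReal.ofReal (2 * crNorm n r ξ * Real.exp (-(b - r) * k)) * muExp μ b := by
  have hsk : s ≤ k := hs.2.trans hTk
  have htail : ∀ u ∈ Set.Iio (-s),
      ENNReal.ofReal ‖x (s + u) - trunc n k (fun v => y (s + v)) u‖ ≤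
        ENNReal.ofReal (2 * crNorm n r ξ * Real.exp (-(b - r) * k) * Real.exp (-b * u)) :=
    fun u hu => ENNReal.ofReal_le_ofReal
      (norm_sub_trunc_segment_le hξ.2 hr.le hrb.le hxξ hyξ hs.1 hsk hu)
  have hcore : ∀ u ∈ Set.Icc (-s) 0,
      ENNReal.ofReal ‖x (s + u) - trunc n k (fun v => y (s + v)) u‖ =
        ENNReal.ofReal ‖x (s + u) - y (s + u)‖ := fun u hu => by
    rw [trunc_of_le _ (by linarith [hu.1])]
  calc _ ≤ _ := lintegral_Iic_le_Iio_add_Icc _ (a := -s)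
    _ ≤ _ := add_le_add (setLIntegral_le_ofReal_mul_muExp measurableSet_Iio htail)
        (setLIntegral_congr_fun measurableSet_Icc hcore).le
    _ = _ := add_comm _ _

/-- Let `r > 0`, `b > r`, `μ ∈ P_b` a probability measure on `(-∞,0]`, `ξ ∈ C_r`,
`T > 0`, `k ≥ T`, and let `x, y` be Borel measurable with `x = y = ξ` on `(-∞,0]`.
Then for every `s ∈ [0,T]`, denoting by `x_s(u) = x(s+u)` the segment,
`∫_{(-∞,0]} |x_s(u) - π_k(y_s)(u)| μ(du)
  ≤ ∫_{[-s,0]} |x(s+u) - y(s+u)| μ(du) + 2 ‖ξ‖_r μ^{(b)} e^{-(b-r)k}`. -/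
theorem stmt_11 (n : ℕ) (r b k T s : ℝ) (hr : 0 < r) (hrb : r < b)
    (μ : Measure ℝ) [IsProbabilityMeasure μ] (hsupp : μ (Set.Ioi 0) = 0)
    (hfin : muExp μ b < ⊤)
    (ξ : ℝ → EuclideanSpace ℝ (Fin n)) (hξ : MemCr n r ξ)
    (hT : 0 < T) (hTk : T ≤ k)
    (x y : ℝ → EuclideanSpace ℝ (Fin n)) (hx : Measurable x) (hy : Measurable y)
    (hxξ : ∀ u ≤ (0 : ℝ), x u = ξ u) (hyξ : ∀ u ≤ (0 : ℝ), y u = ξ u)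
    (hs : s ∈ Set.Icc 0 T) :
    (∫⁻ u in Set.Iic 0,
        ENNReal.ofReal ‖x (s + u) - trunc n k (fun v => y (s + v)) u‖ ∂μ) ≤
      (∫⁻ u in Set.Icc (-s) 0, ENNReal.ofReal ‖x (s + u) - y (s + u)‖ ∂μ) +
        ENNReal.ofReal (2 * crNorm n r ξ * Real.exp (-(b - r) * k)) * muExp μ b :=
  stmt_11_general n r b k T s hr hrb μ ξ hξ hTk x y hxξ hyξ hs
end

section
/- Let r > 0, b₁ > 0, K̂ > 0, and let W : ℝ^n × ℝ → [0, ∞) satisfy W(x, u) ≤ K̂ (1 + |x|^{b₁}) for all x ∈ ℝ^n and all u ≤ 0. Let ξ ∈ C_r, let 0 < t ≤ k, and let x : (-∞, t] → ℝ^n satisfy x(u) = ξ(u) for all u ≤ 0. Then sup_{0 ≤ s ≤ t} sup_{u ≤ −s} e^{r b₁ (s + u)} W(π_k(x_s)(u), s + u) ≤ K̂ (1 + ‖ξ‖_r^{b₁}). -/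
/-- Let `r, b₁, K̂ > 0` and let `W : ℝ^n × ℝ → [0,∞)` satisfy
`W(x,u) ≤ K̂ (1 + |x|^{b₁})` for all `x` and `u ≤ 0`.  Let `ξ ∈ C_r`,
`0 < t ≤ k`, and let `x : (-∞,t] → ℝ^n` agree with `ξ` on `(-∞,0]`.  Then
(with `x_s(u) = x(s+u)` the segment)
`sup_{0 ≤ s ≤ t} sup_{u ≤ -s} e^{r b₁ (s+u)} W(π_k(x_s)(u), s+u) ≤ K̂ (1 + ‖ξ‖_r^{b₁})`. -/
theorem stmt_12 (n : ℕ) (r b₁ K k t : ℝ) (hr : 0 < r) (hb₁ : 0 < b₁) (hK : 0 < K)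
    (W : EuclideanSpace ℝ (Fin n) → ℝ → ℝ) (hWnn : ∀ x u, 0 ≤ W x u)
    (hW : ∀ (x : EuclideanSpace ℝ (Fin n)) (u : ℝ), u ≤ 0 → W x u ≤ K * (1 + ‖x‖ ^ b₁))
    (ξ : ℝ → EuclideanSpace ℝ (Fin n)) (hξ : MemCr n r ξ)
    (ht : 0 < t) (htk : t ≤ k)
    (x : ℝ → EuclideanSpace ℝ (Fin n)) (hxξ : ∀ u ≤ (0 : ℝ), x u = ξ u) :
    sSup {y : ℝ | ∃ s u : ℝ, 0 ≤ s ∧ s ≤ t ∧ u ≤ -s ∧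
        y = Real.exp (r * b₁ * (s + u)) *
              W (trunc n k (fun v => x (s + v)) u) (s + u)} ≤
      K * (1 + crNorm n r ξ ^ b₁) := by
  set M := crNorm n r ξ with hM
  have hMem : ∀ v ≤ (0:ℝ), Real.exp (r * v) * ‖ξ v‖ ≤ M := by
    intro v hv
    exact le_csSup hξ.2 ⟨v, hv, rfl⟩
  have hM0 : 0 ≤ M := by
    have := hMem 0 le_rfl
    have h0 : (0:ℝ) ≤ Real.exp (r * 0) * ‖ξ 0‖ :=
      mul_nonneg (Real.exp_pos _).le (norm_nonneg _)
    linarith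
  have hbound : 0 ≤ K * (1 + M ^ b₁) := by
    have := Real.rpow_nonneg hM0 b₁
    positivity
  apply Real.sSup_le _ hbound
  rintro y ⟨s, u, hs0, hst, hus, rfl⟩
  have hsu : s + u ≤ 0 := by linarith
  -- the truncated value is ξ v for some v ≤ 0 with s + u ≤ v
  obtain ⟨v, hv0, hsv, hz⟩ :
      ∃ v, v ≤ 0 ∧ s + u ≤ v ∧ trunc n k (fun w => x (s + w)) u = ξ v := by
    unfold trunc
    by_cases h : -k ≤ u
    · exact ⟨s + u, hsu, le_rfl, by rw [if_pos h]; exact hxξ _ hsu⟩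
    · refine ⟨s - k, by linarith, by push_neg at h; linarith, ?_⟩
      rw [if_neg h]
      show x (s + -k) = ξ (s - k)
      rw [show s + -k = s - k by ring]
      exact hxξ _ (by linarith)
  rw [hz]
  have hWle := hW (ξ v) (s + u) hsu
  calc Real.exp (r * b₁ * (s + u)) * W (ξ v) (s + u)
      ≤ Real.exp (r * b₁ * (s + u)) * (K * (1 + ‖ξ v‖ ^ b₁)) := by
        exact mul_le_mul_of_nonneg_left hWle (Real.exp_pos _).le
    _ ≤ Real.exp (r * b₁ * v) * (K * (1 + ‖ξ v‖ ^ b₁)) := by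
        apply mul_le_mul_of_nonneg_right
        · exact Real.exp_le_exp.mpr (mul_le_mul_of_nonneg_left hsv (mul_nonneg hr.le hb₁.le))
        · have := Real.rpow_nonneg (norm_nonneg (ξ v)) b₁
          positivity
    _ = K * (Real.exp (r * b₁ * v) + (Real.exp (r * v) * ‖ξ v‖) ^ b₁) := by
        rw [Real.mul_rpow (Real.exp_pos _).le (norm_nonneg _)]
        rw [← Real.exp_mul]
        ring_nf
    _ ≤ K * (1 + M ^ b₁) := by
        apply mul_le_mul_of_nonneg_left _ hK.le
        have h1 : Real.exp (r * b₁ * v) ≤ 1 :=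
          Real.exp_le_one_iff.mpr (mul_nonpos_of_nonneg_of_nonpos (mul_nonneg hr.le hb₁.le) hv0)
        have h2 : (Real.exp (r * v) * ‖ξ v‖) ^ b₁ ≤ M ^ b₁ :=
          Real.rpow_le_rpow (mul_nonneg (Real.exp_pos _).le (norm_nonneg _))
            (hMem v hv0) hb₁.le
        linarith
end

section
/- Let q̄ ≥ 2 be a real number, let e, a ∈ ℝ^n, and let c ≥ 0. Then q̄ |e|^{q̄−2} ( ⟨e, a⟩ + ((q̄ − 1)/2) c² ) ≤ (q̄ (q̄ − 1)/2) |e|^{q̄} + q̄ · max(|a|^{q̄}, c^{q̄}), where ⟨·,·⟩ is the Euclidean inner product on ℝ^n and |e|^{q̄−2} is interpreted as 1 when e = 0 and q̄ = 2. -/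
open scoped RealInnerProductSpace

/-! Bound `⟪e, a⟫ ≤ ‖e‖ ‖a‖` and apply weighted Young's inequality twice with exponent `q̄`:
`r^{q̄-1} ‖a‖ ≤ ((q̄-1)/q̄) r^{q̄} + (1/q̄) ‖a‖^{q̄}` and `r^{q̄-2} c² ≤ ((q̄-2)/q̄) r^{q̄} + (2/q̄) c^{q̄}`,
where `r = ‖e‖`. The two `r^{q̄}` terms add up to exactly `(q̄(q̄-1)/2) r^{q̄}`, and
`‖a‖^{q̄} + (q̄-1) c^{q̄} ≤ q̄ max(‖a‖^{q̄}, c^{q̄})`. -/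

namespace Real

theorem rpow_sub_mul_rpow_le_add {x y p q : ℝ} (hx : 0 ≤ x) (hy : 0 ≤ y) (hp : 0 ≤ p)
    (hpq : p ≤ q) (hq : 0 < q) :
    x ^ (q - p) * y ^ p ≤ (q - p) / q * x ^ q + p / q * y ^ q := by
  have hweights : (q - p) / q + p / q = 1 := by field_simp; ring
  have h := geom_mean_le_arith_mean2_weighted (div_nonneg (sub_nonneg.2 hpq) hq.le)
    (div_nonneg hp hq.le) (rpow_nonneg hx q) (rpow_nonneg hy q) hweights
  rwa [← rpow_mul hx, ← rpow_mul hy, mul_div_cancel₀ _ hq.ne',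
    mul_div_cancel₀ _ hq.ne'] at h

theorem mul_rpow_sub_two_mul_le {q r A c : ℝ} (hq : 2 ≤ q) (hr : 0 ≤ r) (hA : 0 ≤ A)
    (hc : 0 ≤ c) :
    q * r ^ (q - 2) * (r * A + (q - 1) / 2 * c ^ 2) ≤
      q * (q - 1) / 2 * r ^ q + q * max (A ^ q) (c ^ q) := by
  have hq0 : 0 < q := by linarith
  have hq1 : 0 ≤ q - 1 := by linarith
  have young_A := rpow_sub_mul_rpow_le_add hr hA zero_le_one (by linarith) hq0
  have young_c := rpow_sub_mul_rpow_le_add hr hc zero_le_two hq hq0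
  rw [rpow_one] at young_A
  rw [rpow_two] at young_c
  have hr_pow : r ^ (q - 2) * r = r ^ (q - 1) := by
    rw [← rpow_add_one' hr (by linarith)]; ring_nf
  have hmax_A := le_max_left (A ^ q) (c ^ q)
  have hmax_c := mul_le_mul_of_nonneg_left (le_max_right (A ^ q) (c ^ q)) hq1
  calc q * r ^ (q - 2) * (r * A + (q - 1) / 2 * c ^ 2)
      = q * (r ^ (q - 1) * A) + q * (q - 1) / 2 * (r ^ (q - 2) * c ^ 2) := by
        rw [← hr_pow]; ring
    _ ≤ q * ((q - 1) / q * r ^ q + 1 / q * A ^ q)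
          + q * (q - 1) / 2 * ((q - 2) / q * r ^ q + 2 / q * c ^ q) := by
        gcongr
    _ = q * (q - 1) / 2 * r ^ q + A ^ q + (q - 1) * c ^ q := by
        field_simp; ring
    _ ≤ q * (q - 1) / 2 * r ^ q + q * max (A ^ q) (c ^ q) := by
        linarith

end Real

/-- Let `q̄ ≥ 2`, `e, a ∈ ℝ^n`, `c ≥ 0`.  Then
`q̄ |e|^{q̄-2} (⟨e,a⟩ + ((q̄-1)/2) c²) ≤ (q̄(q̄-1)/2) |e|^{q̄} + q̄ max(|a|^{q̄}, c^{q̄})`,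
where powers are real powers (so `|e|^{q̄-2} = 1` when `e = 0` and `q̄ = 2`,
by the convention `0^0 = 1` of `Real.rpow`). -/
theorem stmt_16 (n : ℕ) (qbar : ℝ) (hqbar : 2 ≤ qbar)
    (e a : EuclideanSpace ℝ (Fin n)) (c : ℝ) (hc : 0 ≤ c) :
    qbar * ‖e‖ ^ (qbar - 2) * (⟪e, a⟫ + ((qbar - 1) / 2) * c ^ 2) ≤
      (qbar * (qbar - 1) / 2) * ‖e‖ ^ qbar + qbar * max (‖a‖ ^ qbar) (c ^ qbar) := by
  calc qbar * ‖e‖ ^ (qbar - 2) * (⟪e, a⟫ + ((qbar - 1) / 2) * c ^ 2)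
      ≤ qbar * ‖e‖ ^ (qbar - 2) * (‖e‖ * ‖a‖ + ((qbar - 1) / 2) * c ^ 2) := by
        have : 0 ≤ qbar := by linarith
        gcongr
        exact real_inner_le_norm e a
    _ ≤ _ := Real.mul_rpow_sub_two_mul_le hqbar (norm_nonneg e) (norm_nonneg a) hc
end

section
/- Let r > 0, let q̄ ≥ 2 be real, let c₁ > 0, and let μ ∈ P_{r q̄} be a probability measure on (-∞, 0]. Let φ, ψ ∈ C_r, and suppose a ∈ ℝ^n and c ≥ 0 satisfy max(|a|, c) ≤ c₁ ∫_{(-∞,0]} |φ(u) − ψ(u)| μ(du). Then q̄ |φ(0) − ψ(0)|^{q̄−2} ( ⟨φ(0) − ψ(0), a⟩ + ((q̄ − 1)/2) c² ) ≤ q̄ ( q̄ − 1 + 2 c₁^{q̄} ) ∫_{(-∞,0]} |φ(u) − ψ(u)|^{q̄} μ̄(du), where μ̄ = ½(μ + δ₀), δ₀ is the Dirac measure at 0, and |φ(0) − ψ(0)|^{q̄−2} is interpreted as 1 when φ(0) = ψ(0) and q̄ = 2. -/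
open MeasureTheory
open scoped ENNReal RealInnerProductSpace

/-!
Write `x = |φ(0) - ψ(0)|` and `M = c₁ ∫ |φ - ψ| dμ`. Cauchy–Schwarz and the hypothesis bound the
left side by `q x^(q-1) M + q (q-1)/2 x^(q-2) M²`, and the weighted AM–GM inequality
`q x^(q-k) M^k ≤ (q-k) x^q + k M^q` for `k = 1, 2` turns this into `q (q-1)/2 x^q + q M^q`.
Jensen's inequality for the probability measure `μ` gives `M^q ≤ c₁^q ∫ |φ - ψ|^q dμ`, and the
right side is `q (q-1+2c₁^q)/2 (∫ |φ - ψ|^q dμ + x^q)`, which dominates both terms. The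
exponential growth bound of `C_r` together with `μ ∈ P_{rq}` makes `|φ - ψ|^q` integrable.
-/

open Real Set

theorem Real.mul_rpow_sub_mul_rpow_le {x y q k : ℝ} (hx : 0 ≤ x) (hy : 0 ≤ y) (hk : 0 ≤ k)
    (hkq : k ≤ q) : q * (x ^ (q - k) * y ^ k) ≤ (q - k) * x ^ q + k * y ^ q := by
  obtain rfl | hq := (hk.trans hkq).eq_or_lt
  · obtain rfl : k = 0 := le_antisymm hkq hk
    simp
  have h := geom_mean_le_arith_mean2_weighted (div_nonneg (sub_nonneg.2 hkq) hq.le)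
    (div_nonneg hk hq.le) (rpow_nonneg hx q) (rpow_nonneg hy q) (by field_simp; ring)
  rw [← rpow_mul hx, ← rpow_mul hy, mul_div_cancel₀ _ hq.ne', mul_div_cancel₀ _ hq.ne'] at h
  calc q * (x ^ (q - k) * y ^ k) ≤ q * ((q - k) / q * x ^ q + k / q * y ^ q) := by gcongr
    _ = (q - k) * x ^ q + k * y ^ q := by field_simp

theorem Real.rpow_sub_two_mul_add_le {q x y s c : ℝ} (hq : 2 ≤ q) (hx : 0 ≤ x) (hy : 0 ≤ y)
    (hs : s ≤ x * y) (hc : 0 ≤ c) (hcy : c ≤ y) :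
    q * x ^ (q - 2) * (s + (q - 1) / 2 * c ^ 2) ≤ q * (q - 1) / 2 * x ^ q + q * y ^ q := by
  have hq₁ : 0 ≤ q - 1 := by linarith
  have hxx : x ^ (q - 2) * x = x ^ (q - 1) := by
    rw [← rpow_add_one' hx (by linarith)]; ring_nf
  have h₁ := mul_rpow_sub_mul_rpow_le hx hy zero_le_one (by linarith : (1 : ℝ) ≤ q)
  have h₂ := mul_rpow_sub_mul_rpow_le hx hy zero_le_two hq
  rw [rpow_one, one_mul] at h₁
  rw [rpow_two] at h₂
  calc q * x ^ (q - 2) * (s + (q - 1) / 2 * c ^ 2)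
      ≤ q * x ^ (q - 2) * (x * y + (q - 1) / 2 * y ^ 2) := by gcongr
    _ = q * (x ^ (q - 1) * y) + (q - 1) / 2 * (q * (x ^ (q - 2) * y ^ 2)) := by
        rw [← hxx]; ring
    _ ≤ ((q - 1) * x ^ q + y ^ q) + (q - 1) / 2 * ((q - 2) * x ^ q + 2 * y ^ q) := by gcongr
    _ = q * (q - 1) / 2 * x ^ q + q * y ^ q := by ring

theorem MeasureTheory.rpow_integral_norm_le_integral_norm_rpow {α E : Type*} [MeasurableSpace α]
    [NormedAddCommGroup E] {μ : Measure α} [IsProbabilityMeasure μ] {f : α → E} {p : ℝ}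
    (hp : 1 ≤ p) (hf : AEStronglyMeasurable f μ) (hfp : Integrable (fun x => ‖f x‖ ^ p) μ) :
    (∫ x, ‖f x‖ ∂μ) ^ p ≤ ∫ x, ‖f x‖ ^ p ∂μ := by
  have hf₁ : Integrable (fun x => ‖f x‖) μ := by
    simpa using integrable_norm_rpow_of_le hf zero_le_one (by linarith) hp hfp
  exact (convexOn_rpow hp).map_integral_le (continuous_rpow_const (by linarith)).continuousOn
    isClosed_Ici (ae_of_all _ fun x => norm_nonneg (f x)) hf₁ hfp

theorem MeasureTheory.setIntegral_half_smul_add_dirac {α E : Type*} [MeasurableSpace α]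
    [MeasurableSingletonClass α] [NormedAddCommGroup E] [NormedSpace ℝ E] [CompleteSpace E]
    {μ : Measure α} {s : Set α} {g : α → E} (hg : IntegrableOn g s μ) {a : α} (ha : a ∈ s) :
    ∫ x in s, g x ∂((1 / 2 : ℝ≥0∞) • (μ + Measure.dirac a)) =
      (2⁻¹ : ℝ) • (∫ x in s, g x ∂μ + g a) := by
  classical
  rw [Measure.restrict_smul, Measure.restrict_add, restrict_dirac, if_pos ha,
    integral_smul_measure, integral_add_measure hg (integrable_dirac (by simp)), integral_dirac]
  simp

theorem integrable_exp_of_muExp_lt_top {μ : Measure ℝ} {b : ℝ} (h : muExp μ b < ⊤) :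
    Integrable (fun u => exp (-b * u)) μ :=
  (lintegral_ofReal_ne_top_iff_integrable (by fun_prop)
    (ae_of_all _ fun u => (exp_pos _).le)).1 h.ne

namespace MemCr

variable {n : ℕ} {r : ℝ} {φ ψ : ℝ → EuclideanSpace ℝ (Fin n)}

theorem sub (hφ : MemCr n r φ) (hψ : MemCr n r ψ) : MemCr n r (φ - ψ) := by
  obtain ⟨Cφ, hCφ⟩ := hφ.2
  obtain ⟨Cψ, hCψ⟩ := hψ.2
  refine ⟨hφ.1.sub hψ.1, Cφ + Cψ, ?_⟩
  rintro _ ⟨u, hu, rfl⟩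
  calc exp (r * u) * ‖φ u - ψ u‖ ≤ exp (r * u) * ‖φ u‖ + exp (r * u) * ‖ψ u‖ := by
        rw [← mul_add]; gcongr; exact norm_sub_le _ _
    _ ≤ Cφ + Cψ := add_le_add (hCφ ⟨u, hu, rfl⟩) (hCψ ⟨u, hu, rfl⟩)

theorem exists_norm_le (hφ : MemCr n r φ) :
    ∃ C, 0 ≤ C ∧ ∀ u ∈ Iic (0 : ℝ), ‖φ u‖ ≤ C * exp (-r * u) := by
  obtain ⟨C, hC⟩ := hφ.2
  refine ⟨max C 0, le_max_right _ _, fun u hu => ?_⟩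
  rw [neg_mul, exp_neg, ← div_eq_mul_inv, le_div_iff₀ (exp_pos _), mul_comm]
  exact (hC ⟨u, hu, rfl⟩).trans (le_max_left _ _)

theorem integrable_norm_rpow {μ : Measure ℝ} {p : ℝ} (hp : 0 ≤ p) (hφ : MemCr n r φ)
    (hμ : muExp μ (r * p) < ⊤) :
    Integrable (fun u => ‖φ u‖ ^ p) (μ.restrict (Iic 0)) := by
  obtain ⟨C, hC₀, hC⟩ := hφ.exists_norm_le
  refine ((integrable_exp_of_muExp_lt_top hμ).restrict.const_mul (C ^ p)).mono'
    ((hφ.1.norm.rpow_const fun _ _ => Or.inr hp).aestronglyMeasurable measurableSet_Iic) ?_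
  filter_upwards [ae_restrict_mem measurableSet_Iic] with u hu
  rw [Real.norm_of_nonneg (by positivity)]
  calc ‖φ u‖ ^ p ≤ (C * exp (-r * u)) ^ p := by gcongr; exact hC u hu
    _ = C ^ p * exp (-(r * p) * u) := by
      rw [mul_rpow hC₀ (exp_pos _).le, ← exp_mul]; ring_nf

end MemCr

theorem stmt_17_general (n : ℕ) (r qbar c₁ : ℝ) (hqbar : 2 ≤ qbar) (hc₁ : 0 < c₁)
    (μ : Measure ℝ) [IsProbabilityMeasure μ] (hsupp : μ (Set.Ioi 0) = 0)
    (hfin : muExp μ (r * qbar) < ⊤)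
    (φ ψ : ℝ → EuclideanSpace ℝ (Fin n)) (hφ : MemCr n r φ) (hψ : MemCr n r ψ)
    (a : EuclideanSpace ℝ (Fin n)) (c : ℝ) (hc : 0 ≤ c)
    (hbound : max ‖a‖ c ≤ c₁ * ∫ u in Set.Iic 0, ‖φ u - ψ u‖ ∂μ) :
    qbar * ‖φ 0 - ψ 0‖ ^ (qbar - 2) * (⟪φ 0 - ψ 0, a⟫ + ((qbar - 1) / 2) * c ^ 2) ≤
      qbar * (qbar - 1 + 2 * c₁ ^ qbar) *
        ∫ u in Set.Iic 0, ‖φ u - ψ u‖ ^ qbar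
          ∂(((1 : ℝ≥0∞) / 2) • (μ + Measure.dirac 0)) := by
  have hμ : μ.restrict (Iic 0) = μ :=
    Measure.restrict_eq_self_of_ae_mem (ae_iff.2 (by rwa [← compl_Iic] at hsupp))
  have hf : MemCr n r (fun u => φ u - ψ u) := hφ.sub hψ
  have hfq := hf.integrable_norm_rpow (by linarith) hfin
  have hf_meas := hf.1.aestronglyMeasurable (μ := μ) measurableSet_Iic
  rw [setIntegral_half_smul_add_dirac hfq self_mem_Iic, smul_eq_mul]
  rw [hμ] at hbound hfq hf_meas ⊢
  set I := ∫ u, ‖φ u - ψ u‖ ∂μ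
  set J := ∫ u, ‖φ u - ψ u‖ ^ qbar ∂μ
  have hI : 0 ≤ I := integral_nonneg fun u => norm_nonneg _
  have hJ : 0 ≤ J := integral_nonneg fun u => rpow_nonneg (norm_nonneg _) _
  have hjensen : I ^ qbar ≤ J :=
    rpow_integral_norm_le_integral_norm_rpow (by linarith) hf_meas hfq
  have hinner : ⟪φ 0 - ψ 0, a⟫ ≤ ‖φ 0 - ψ 0‖ * (c₁ * I) :=
    (real_inner_le_norm _ _).trans (by gcongr; exact (le_max_left _ _).trans hbound)
  calc _ ≤ qbar * (qbar - 1) / 2 * ‖φ 0 - ψ 0‖ ^ qbar + qbar * (c₁ * I) ^ qbar :=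
        rpow_sub_two_mul_add_le hqbar (norm_nonneg _) (by positivity) hinner hc
          ((le_max_right _ _).trans hbound)
    _ ≤ qbar * (qbar - 1) / 2 * ‖φ 0 - ψ 0‖ ^ qbar + qbar * (c₁ ^ qbar * J) := by
        rw [mul_rpow hc₁.le hI]; gcongr
    _ ≤ _ := by
        have : 0 ≤ qbar * (qbar - 1) / 2 * J + qbar * c₁ ^ qbar * ‖φ 0 - ψ 0‖ ^ qbar := by
          have : 0 ≤ qbar - 1 := by linarith
          positivity
        linarith

/-- Let `r > 0`, `q̄ ≥ 2`, `c₁ > 0`, `μ ∈ P_{r q̄}` a probability measure on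
`(-∞,0]`, and `φ, ψ ∈ C_r`.  If `a ∈ ℝ^n` and `c ≥ 0` satisfy
`max(|a|, c) ≤ c₁ ∫ |φ(u)-ψ(u)| μ(du)`, then
`q̄ |φ(0)-ψ(0)|^{q̄-2} (⟨φ(0)-ψ(0), a⟩ + ((q̄-1)/2) c²)
  ≤ q̄ (q̄-1+2c₁^{q̄}) ∫ |φ(u)-ψ(u)|^{q̄} μ̄(du)` where `μ̄ = ½(μ + δ₀)`
(real powers, so `|φ(0)-ψ(0)|^{q̄-2} = 1` when `φ(0) = ψ(0)`, `q̄ = 2`). -/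
theorem stmt_17 (n : ℕ) (r qbar c₁ : ℝ) (hr : 0 < r) (hqbar : 2 ≤ qbar) (hc₁ : 0 < c₁)
    (μ : Measure ℝ) [IsProbabilityMeasure μ] (hsupp : μ (Set.Ioi 0) = 0)
    (hfin : muExp μ (r * qbar) < ⊤)
    (φ ψ : ℝ → EuclideanSpace ℝ (Fin n)) (hφ : MemCr n r φ) (hψ : MemCr n r ψ)
    (a : EuclideanSpace ℝ (Fin n)) (c : ℝ) (hc : 0 ≤ c)
    (hbound : max ‖a‖ c ≤ c₁ * ∫ u in Set.Iic 0, ‖φ u - ψ u‖ ∂μ) :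
    qbar * ‖φ 0 - ψ 0‖ ^ (qbar - 2) * (⟪φ 0 - ψ 0, a⟫ + ((qbar - 1) / 2) * c ^ 2) ≤
      qbar * (qbar - 1 + 2 * c₁ ^ qbar) *
        ∫ u in Set.Iic 0, ‖φ u - ψ u‖ ^ qbar
          ∂(((1 : ℝ≥0∞) / 2) • (μ + Measure.dirac 0)) :=
  stmt_17_general n r qbar c₁ hqbar hc₁ μ hsupp hfin φ ψ hφ hψ a c hc hbound
end

section
/- Let p > 2, p̄ > 0, and c₆, c₇, c₈, c₉ ≥ 0. Define c̄₇ = p c₇ − p (c₈ + c₉)(p − 2)/(p + p̄), c̄₈ = p c₈ (2 + p̄)/(p + p̄), and c̄₉ = p c₉ (2 + p̄)/(p + p̄). Then for all x, y, z ∈ ℝ^n: p |x|^{p−2} ( c₆ (1 + |x|² + |y|² + |z|²) − c₇ |x|^{2+p̄} + c₈ |y|^{2+p̄} + c₉ |z|^{2+p̄} ) ≤ 4 p c₆ (1 + |x|^p + |y|^p + |z|^p) − c̄₇ |x|^{p+p̄} + c̄₈ |y|^{p+p̄} + c̄₉ |z|^{p+p̄}. Moreover, if c₇ ≥ c₈ +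 c₉, then c̄₇ ≥ c̄₈ + c̄₉. -/
private lemma young_aux (a b s t : ℝ) (ha : 0 ≤ a) (hb : 0 ≤ b) (hs : 0 < s) (ht : 0 < t) :
    a ^ s * b ^ t ≤ (s / (s + t)) * a ^ (s + t) + (t / (s + t)) * b ^ (s + t) := by
  have hst : 0 < s + t := by linarith
  have h := Real.geom_mean_le_arith_mean2_weighted
    (by positivity : (0:ℝ) ≤ s / (s + t)) (by positivity : (0:ℝ) ≤ t / (s + t))
    (by positivity : (0:ℝ) ≤ a ^ (s + t)) (by positivity : (0:ℝ) ≤ b ^ (s + t))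
    (by field_simp)
  have e1 : (a ^ (s + t)) ^ (s / (s + t)) = a ^ s := by
    rw [← Real.rpow_mul ha]; congr 1; field_simp
  have e2 : (b ^ (s + t)) ^ (t / (s + t)) = b ^ t := by
    rw [← Real.rpow_mul hb]; congr 1; field_simp
  rwa [e1, e2] at h

/-- Let `p > 2`, `p̄ > 0`, `c₆, c₇, c₈, c₉ ≥ 0`, and set
`c̄₇ = p c₇ - p (c₈+c₉)(p-2)/(p+p̄)`, `c̄₈ = p c₈ (2+p̄)/(p+p̄)`,
`c̄₉ = p c₉ (2+p̄)/(p+p̄)`.  Then for all `x, y, z ∈ ℝ^n`,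
`p |x|^{p-2} (c₆(1+|x|²+|y|²+|z|²) - c₇|x|^{2+p̄} + c₈|y|^{2+p̄} + c₉|z|^{2+p̄})
  ≤ 4 p c₆ (1+|x|^p+|y|^p+|z|^p) - c̄₇|x|^{p+p̄} + c̄₈|y|^{p+p̄} + c̄₉|z|^{p+p̄}`;
moreover `c₇ ≥ c₈ + c₉` implies `c̄₇ ≥ c̄₈ + c̄₉`.  (All powers are real powers.) -/
theorem stmt_19 (n : ℕ) (p pbar c₆ c₇ c₈ c₉ : ℝ) (hp : 2 < p) (hpbar : 0 < pbar)
    (h₆ : 0 ≤ c₆) (h₇ : 0 ≤ c₇) (h₈ : 0 ≤ c₈) (h₉ : 0 ≤ c₉) :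
    (∀ x y z : EuclideanSpace ℝ (Fin n),
      p * ‖x‖ ^ (p - 2) *
          (c₆ * (1 + ‖x‖ ^ (2 : ℝ) + ‖y‖ ^ (2 : ℝ) + ‖z‖ ^ (2 : ℝ))
            - c₇ * ‖x‖ ^ (2 + pbar) + c₈ * ‖y‖ ^ (2 + pbar) + c₉ * ‖z‖ ^ (2 + pbar)) ≤
        4 * p * c₆ * (1 + ‖x‖ ^ p + ‖y‖ ^ p + ‖z‖ ^ p)
          - (p * c₇ - p * (c₈ + c₉) * (p - 2) / (p + pbar)) * ‖x‖ ^ (p + pbar)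
          + (p * c₈ * (2 + pbar) / (p + pbar)) * ‖y‖ ^ (p + pbar)
          + (p * c₉ * (2 + pbar) / (p + pbar)) * ‖z‖ ^ (p + pbar)) ∧
    (c₈ + c₉ ≤ c₇ →
      p * c₈ * (2 + pbar) / (p + pbar) + p * c₉ * (2 + pbar) / (p + pbar) ≤
        p * c₇ - p * (c₈ + c₉) * (p - 2) / (p + pbar)) := by
  have hp0 : 0 < p := by linarith
  have hs : 0 < p + pbar := by linarith
  have hp2 : 0 < p - 2 := by linarith
  have h2p : 0 < 2 + pbar := by linarith
  constructor
  · intro x y z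
    set a := ‖x‖ with hadef
    set b := ‖y‖ with hbdef
    set c := ‖z‖ with hcdef
    have ha : 0 ≤ a := norm_nonneg x
    have hb : 0 ≤ b := norm_nonneg y
    have hc : 0 ≤ c := norm_nonneg z
    have hA : 0 ≤ a ^ p := Real.rpow_nonneg ha p
    have hB : 0 ≤ b ^ p := Real.rpow_nonneg hb p
    have hC : 0 ≤ c ^ p := Real.rpow_nonneg hc p
    -- a^(p-2) ≤ 1 + a^p
    have h1 : a ^ (p - 2) ≤ 1 + a ^ p := by
      rcases le_or_gt a 1 with h | h
      · have : a ^ (p - 2) ≤ 1 := Real.rpow_le_one ha h (le_of_lt hp2)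
        linarith
      · have : a ^ (p - 2) ≤ a ^ p :=
          Real.rpow_le_rpow_of_exponent_le h.le (by linarith)
        linarith
    -- a^(p-2) * a^2 = a^p
    have h2 : a ^ (p - 2) * a ^ (2:ℝ) = a ^ p := by
      rw [← Real.rpow_add' ha (ne_of_gt (by linarith : (0:ℝ) < p - 2 + 2))]
      ring_nf
    -- Young bounds with exponent p
    have h3 : a ^ (p - 2) * b ^ (2:ℝ) ≤ a ^ p + b ^ p := by
      have := young_aux a b (p - 2) 2 ha hb hp2 (by norm_num)
      have e : p - 2 + 2 = p := by ring
      rw [e] at this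
      have k1 : (p - 2) / p ≤ 1 := by rw [div_le_one hp0]; linarith
      have k2 : (2:ℝ) / p ≤ 1 := by rw [div_le_one hp0]; linarith
      nlinarith [Real.rpow_nonneg ha p, Real.rpow_nonneg hb p]
    have h4 : a ^ (p - 2) * c ^ (2:ℝ) ≤ a ^ p + c ^ p := by
      have := young_aux a c (p - 2) 2 ha hc hp2 (by norm_num)
      have e : p - 2 + 2 = p := by ring
      rw [e] at this
      have k1 : (p - 2) / p ≤ 1 := by rw [div_le_one hp0]; linarith
      have k2 : (2:ℝ) / p ≤ 1 := by rw [div_le_one hp0]; linarith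
      nlinarith [Real.rpow_nonneg ha p, Real.rpow_nonneg hc p]
    -- a^(p-2) * a^(2+pbar) = a^(p+pbar)
    have h5 : a ^ (p - 2) * a ^ (2 + pbar) = a ^ (p + pbar) := by
      rw [← Real.rpow_add' ha (by intro h; linarith [hs] : p - 2 + (2 + pbar) ≠ 0)]
      ring_nf
    have e' : p - 2 + (2 + pbar) = p + pbar := by ring
    have h6 : a ^ (p - 2) * b ^ (2 + pbar) ≤
        (p - 2) / (p + pbar) * a ^ (p + pbar) + (2 + pbar) / (p + pbar) * b ^ (p + pbar) := by
      have := young_aux a b (p - 2) (2 + pbar) ha hb hp2 h2p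
      rwa [e'] at this
    have h7 : a ^ (p - 2) * c ^ (2 + pbar) ≤
        (p - 2) / (p + pbar) * a ^ (p + pbar) + (2 + pbar) / (p + pbar) * c ^ (p + pbar) := by
      have := young_aux a c (p - 2) (2 + pbar) ha hc hp2 h2p
      rwa [e'] at this
    -- multiply by nonneg coefficients
    have t1 : p * c₆ * a ^ (p - 2) ≤ p * c₆ * (1 + a ^ p) :=
      mul_le_mul_of_nonneg_left h1 (by positivity)
    have t2 : p * c₆ * (a ^ (p - 2) * a ^ (2:ℝ)) = p * c₆ * a ^ p := by rw [h2]
    have t3 : p * c₆ * (a ^ (p - 2) * b ^ (2:ℝ)) ≤ p * c₆ * (a ^ p + b ^ p) :=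
      mul_le_mul_of_nonneg_left h3 (by positivity)
    have t4 : p * c₆ * (a ^ (p - 2) * c ^ (2:ℝ)) ≤ p * c₆ * (a ^ p + c ^ p) :=
      mul_le_mul_of_nonneg_left h4 (by positivity)
    have t5 : p * c₇ * (a ^ (p - 2) * a ^ (2 + pbar)) = p * c₇ * a ^ (p + pbar) := by rw [h5]
    have t6 : p * c₈ * (a ^ (p - 2) * b ^ (2 + pbar)) ≤
        p * c₈ * ((p - 2) / (p + pbar) * a ^ (p + pbar)
          + (2 + pbar) / (p + pbar) * b ^ (p + pbar)) :=
      mul_le_mul_of_nonneg_left h6 (by positivity)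
    have t7 : p * c₉ * (a ^ (p - 2) * c ^ (2 + pbar)) ≤
        p * c₉ * ((p - 2) / (p + pbar) * a ^ (p + pbar)
          + (2 + pbar) / (p + pbar) * c ^ (p + pbar)) :=
      mul_le_mul_of_nonneg_left h7 (by positivity)
    have n1 : 0 ≤ p * c₆ := by positivity
    have n2 : 0 ≤ p * c₆ * a ^ p := by positivity
    have n3 : 0 ≤ p * c₆ * b ^ p := by positivity
    have n4 : 0 ≤ p * c₆ * c ^ p := by positivity
    obtain ⟨w, hw⟩ : ∃ w, w = (p + pbar)⁻¹ := ⟨_, rfl⟩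
    rw [div_eq_mul_inv, div_eq_mul_inv, ← hw] at t6 t7
    rw [div_eq_mul_inv, div_eq_mul_inv, div_eq_mul_inv, ← hw]
    linarith [t1, t2, t3, t4, t5, t6, t7, n1, n2, n3, n4]
  · intro h
    have key : p * c₈ * (2 + pbar) / (p + pbar) + p * c₉ * (2 + pbar) / (p + pbar)
        + p * (c₈ + c₉) * (p - 2) / (p + pbar) = p * (c₈ + c₉) := by
      field_simp
      ring
    have : p * (c₈ + c₉) ≤ p * c₇ := by nlinarith
    linarith
end
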